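/- arXiv:2009.03975 — 2 statements merged into one kernel-verified Lean document; each statement's English description precedes it below -/
import Mathlib

section
/- Suppose c > 0 and every nonzero entry of the usage matrix satisfies N(γ,e) ≥ c. Then the function p ↦ c^p · Mod_{p,σ}(Γ) is nonincreasing on [1,∞): for 1 ≤ p₁ ≤ p₂ < ∞, c^{p₂} Mod_{p₂,σ}(Γ) ≤ c^{p₁} Mod_{p₁,σ}(Γ). -/
/-!
Truncating an admissible density at height `1/c` keeps it admissible: an object using an
edge where the truncation bites already has length `≥ c · (1/c) = 1` from that edge alone.
After truncation every value `c ρ(e)` lies in `[0, 1]`, where `t ↦ t^p` decreases in `p`;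
hence `c^{p₂} E_{p₂}(min ρ (1/c)) ≤ c^{p₁} E_{p₁}(ρ)`, and taking infima gives the claim.
-/

open Finset

noncomputable section

/-- A density `ρ` is admissible for the usage matrix `N` if it is nonnegative and
every object has `ρ`-length at least 1. -/
def IsAdmissible {E Γ : Type*} [Fintype E] (N : Γ → E → ℝ) (ρ : E → ℝ) : Prop :=
  (∀ e, 0 ≤ ρ e) ∧ ∀ γ : Γ, 1 ≤ ∑ e, N γ e * ρ e

/-- The `p`-energy of a density. -/
def pEnergy {E : Type*} [Fintype E] (σ : E → ℝ) (p : ℝ) (ρ : E → ℝ) : ℝ :=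
  ∑ e, σ e * ρ e ^ p

/-- The `p`-modulus: the infimum of the `p`-energy over admissible densities. -/
def pModulus {E Γ : Type*} [Fintype E] (N : Γ → E → ℝ) (σ : E → ℝ) (p : ℝ) : ℝ :=
  sInf {x | ∃ ρ : E → ℝ, IsAdmissible N ρ ∧ x = pEnergy σ p ρ}

/-- An empty `A` is allowed: both infima are then the junk value `sInf ∅ = 0`. -/
lemma mul_sInf_image_le_mul_sInf_image {α : Type*} {A : Set α} {f g : α → ℝ} {k l : ℝ}
    (hk : 0 ≤ k) (hl : 0 < l) (hg : ∀ a ∈ A, 0 ≤ g a)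
    (hfg : ∀ a ∈ A, ∃ b ∈ A, k * g b ≤ l * f a) :
    k * sInf (g '' A) ≤ l * sInf (f '' A) := by
  rcases A.eq_empty_or_nonempty with rfl | hA
  · simp
  rw [← div_le_iff₀' hl]
  refine le_csInf (hA.image f) ?_
  rintro _ ⟨a, ha, rfl⟩
  obtain ⟨b, hb, hba⟩ := hfg a ha
  have hbdd : BddBelow (g '' A) := ⟨0, by rintro _ ⟨a, ha, rfl⟩; exact hg a ha⟩
  rw [div_le_iff₀' hl]
  exact (mul_le_mul_of_nonneg_left (csInf_le hbdd (Set.mem_image_of_mem g hb)) hk).trans hba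

section Modulus

variable {E Γ : Type*} [Fintype E]

lemma pEnergy_nonneg {σ : E → ℝ} (hσ : ∀ e, 0 ≤ σ e) (p : ℝ) {ρ : E → ℝ}
    (hρ : ∀ e, 0 ≤ ρ e) : 0 ≤ pEnergy σ p ρ :=
  sum_nonneg fun e _ => mul_nonneg (hσ e) (Real.rpow_nonneg (hρ e) p)

lemma pModulus_eq_sInf_image (N : Γ → E → ℝ) (σ : E → ℝ) (p : ℝ) :
    pModulus N σ p = sInf (pEnergy σ p '' {ρ | IsAdmissible N ρ}) := by
  unfold pModulus
  congr 1
  ext x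
  simp only [Set.mem_ofPred_eq, Set.mem_image, eq_comm]

lemma IsAdmissible.min_inv {N : Γ → E → ℝ} (hN : ∀ γ e, 0 ≤ N γ e) {c : ℝ} (hc : 0 < c)
    (hNc : ∀ γ e, N γ e ≠ 0 → c ≤ N γ e) {ρ : E → ℝ} (hρ : IsAdmissible N ρ) :
    IsAdmissible N fun e => min (ρ e) c⁻¹ := by
  refine ⟨fun e => le_min (hρ.1 e) (inv_nonneg.2 hc.le), fun γ => ?_⟩
  have hterm : ∀ e, N γ e * min (ρ e) c⁻¹ = N γ e * ρ e ∨ 1 ≤ N γ e * min (ρ e) c⁻¹ := by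
    intro e
    rcases le_total (ρ e) c⁻¹ with hle | hge
    · exact .inl (by rw [min_eq_left hle])
    rcases (hN γ e).eq_or_lt with h0 | hpos
    · exact .inl (by simp [← h0])
    · rw [min_eq_right hge, le_mul_inv_iff₀ hc, one_mul]
      exact .inr (hNc γ e hpos.ne')
  by_cases hbig : ∃ e, 1 ≤ N γ e * min (ρ e) c⁻¹
  · obtain ⟨e, he⟩ := hbig
    refine he.trans (single_le_sum (f := fun e => N γ e * min (ρ e) c⁻¹) (fun e _ => ?_)
      (mem_univ e))
    exact mul_nonneg (hN γ e) (le_min (hρ.1 e) (inv_nonneg.2 hc.le))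
  · push Not at hbig
    rw [sum_congr rfl fun e _ => (hterm e).resolve_right (hbig e).not_ge]
    exact hρ.2 γ

lemma rpow_mul_min_inv_rpow_le {c x p₁ p₂ : ℝ} (hc : 0 < c) (hx : 0 ≤ x) (hp₁ : 0 ≤ p₁)
    (hp₁₂ : p₁ ≤ p₂) : c ^ p₂ * min x c⁻¹ ^ p₂ ≤ c ^ p₁ * x ^ p₁ := by
  have hm : 0 ≤ min x c⁻¹ := le_min hx (inv_nonneg.2 hc.le)
  rw [← Real.mul_rpow hc.le hm, ← Real.mul_rpow hc.le hx]
  have hle_one : c * min x c⁻¹ ≤ 1 :=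
    (mul_le_mul_of_nonneg_left (min_le_right _ _) hc.le).trans_eq (mul_inv_cancel₀ hc.ne')
  calc (c * min x c⁻¹) ^ p₂ ≤ (c * min x c⁻¹) ^ p₁ :=
        Real.rpow_le_rpow_of_exponent_ge' (mul_nonneg hc.le hm) hle_one hp₁ hp₁₂
    _ ≤ (c * x) ^ p₁ :=
        Real.rpow_le_rpow (mul_nonneg hc.le hm)
          (mul_le_mul_of_nonneg_left (min_le_left _ _) hc.le) hp₁

lemma rpow_mul_pEnergy_min_inv_le {σ : E → ℝ} (hσ : ∀ e, 0 ≤ σ e) {c p₁ p₂ : ℝ} (hc : 0 < c)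
    (hp₁ : 0 ≤ p₁) (hp₁₂ : p₁ ≤ p₂) {ρ : E → ℝ} (hρ : ∀ e, 0 ≤ ρ e) :
    c ^ p₂ * pEnergy σ p₂ (fun e => min (ρ e) c⁻¹) ≤ c ^ p₁ * pEnergy σ p₁ ρ := by
  simp only [pEnergy, mul_sum]
  refine sum_le_sum fun e _ => ?_
  rw [mul_left_comm, mul_left_comm (c ^ p₁)]
  exact mul_le_mul_of_nonneg_left (rpow_mul_min_inv_rpow_le hc (hρ e) hp₁ hp₁₂) (hσ e)

end Modulus

theorem modulus_scaled_antitone_general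
    {E Γ : Type*} [Fintype E]
    (N : Γ → E → ℝ) (hN : ∀ γ e, 0 ≤ N γ e)
    (σ : E → ℝ) (hσ : ∀ e, 0 < σ e)
    (c : ℝ) (hc : 0 < c) (hNc : ∀ γ e, N γ e ≠ 0 → c ≤ N γ e)
    (p₁ p₂ : ℝ) (hp₁ : 1 ≤ p₁) (hp₁₂ : p₁ ≤ p₂) :
    c ^ p₂ * pModulus N σ p₂ ≤ c ^ p₁ * pModulus N σ p₁ := by
  have hσ' : ∀ e, 0 ≤ σ e := fun e => (hσ e).le
  rw [pModulus_eq_sInf_image, pModulus_eq_sInf_image]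
  refine mul_sInf_image_le_mul_sInf_image (by positivity) (by positivity)
    (fun ρ hρ => pEnergy_nonneg hσ' p₂ hρ.1) fun ρ hρ => ⟨_, hρ.min_inv hN hc hNc, ?_⟩
  exact rpow_mul_pEnergy_min_inv_le hσ' hc (by linarith) hp₁₂ hρ.1

/-- if every nonzero entry of `N` is at least `c > 0`, then
`p ↦ c^p · Mod_{p,σ}(Γ)` is nonincreasing on `[1,∞)`. -/
theorem modulus_scaled_antitone
    {E Γ : Type*} [Fintype E] [Fintype Γ] [Nonempty E] [Nonempty Γ]
    (N : Γ → E → ℝ) (hN : ∀ γ e, 0 ≤ N γ e) (hrow : ∀ γ, ∃ e, 0 < N γ e)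
    (σ : E → ℝ) (hσ : ∀ e, 0 < σ e)
    (c : ℝ) (hc : 0 < c) (hNc : ∀ γ e, N γ e ≠ 0 → c ≤ N γ e)
    (p₁ p₂ : ℝ) (hp₁ : 1 ≤ p₁) (hp₁₂ : p₁ ≤ p₂) :
    c ^ p₂ * pModulus N σ p₂ ≤ c ^ p₁ * pModulus N σ p₁ :=
  modulus_scaled_antitone_general N hN σ hσ c hc hNc p₁ p₂ hp₁ hp₁₂
end
end

section
/- For fixed p ∈ (1,∞), the function F(σ) = Mod_{p,σ}(Γ) is differentiable in each weight, with ∂F/∂σ(e) = ρ*_σ(e)^p for every e ∈ E, where ρ*_σ is the unique optimal density for Mod_{p,σ}(Γ). Precisely: for each e ∈ E, the real function x ↦ Mod_{p, σ[e↦x]}(Γ) (the modulus with the weight of edge e replaced by x, others unchanged) has derivative ρ*_σ(e)^p at x = σ(e). -/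
open Finset

noncomputable section

/-! The modulus `F(x) = Mod_{p, σ[e ↦ x]}` is an infimum of the affine functions
`x ↦ E_{p,σ}(ρ) + (x - σ e) ρ(e)^p`, so `ρ(e)^p` is a supergradient of `F` at any point where `ρ`
is optimal. Writing `ρₓ` for an optimal density at `x`, this sandwiches
`(x - σ e) ρₓ(e)^p ≤ F x - F (σ e) ≤ (x - σ e) ρ*(e)^p`, and it remains to see `ρₓ → ρ*`: the
`ρₓ` stay in a compact set of admissible densities of bounded energy, and every cluster point is
optimal for `σ`, hence equal to `ρ*` because strict convexity of `t ↦ t^p` makes the optimum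
unique. -/

open Filter Topology

section

variable {E Γ : Type*} [Fintype E] {N : Γ → E → ℝ} {σ ρ : E → ℝ} {p : ℝ}

variable (N) in
theorem isClosed_setOf_isAdmissible : IsClosed {ρ : E → ℝ | IsAdmissible N ρ} := by
  simp only [IsAdmissible, Set.ofPred_and, Set.ofPred_forall]
  refine (isClosed_iInter fun e => isClosed_le continuous_const (continuous_apply e)).inter
    (isClosed_iInter fun γ => isClosed_le continuous_const ?_)
  exact continuous_finsetSum _ fun e _ => continuous_const.mul (continuous_apply e)

variable (N) in
theorem convex_setOf_isAdmissible : Convex ℝ {ρ : E → ℝ | IsAdmissible N ρ} := by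
  intro ρ₁ h₁ ρ₂ h₂ a b ha hb hab
  refine ⟨fun e => ?_, fun γ => ?_⟩
  · simp only [Pi.add_apply, Pi.smul_apply, smul_eq_mul]
    nlinarith [h₁.1 e, h₂.1 e]
  · have hsum : ∑ e, N γ e * (a • ρ₁ + b • ρ₂) e
        = a * ∑ e, N γ e * ρ₁ e + b * ∑ e, N γ e * ρ₂ e := by
      simp only [Pi.add_apply, Pi.smul_apply, smul_eq_mul, mul_sum, ← sum_add_distrib]
      exact sum_congr rfl fun e _ => by ring
    rw [hsum]
    nlinarith [h₁.2 γ, h₂.2 γ]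

theorem continuous_pEnergy (hp : 0 ≤ p) :
    Continuous fun q : (E → ℝ) × (E → ℝ) => pEnergy q.1 p q.2 := by
  unfold pEnergy
  fun_prop (disch := exact hp)

theorem pEnergy_mono {τ : E → ℝ} (hστ : ∀ e, σ e ≤ τ e) (hρ : ∀ e, 0 ≤ ρ e) :
    pEnergy σ p ρ ≤ pEnergy τ p ρ :=
  sum_le_sum fun e _ => mul_le_mul_of_nonneg_right (hστ e) (Real.rpow_nonneg (hρ e) p)

theorem mul_rpow_le_pEnergy (hσ : ∀ e, 0 ≤ σ e) (hρ : ∀ e, 0 ≤ ρ e) (e : E) :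
    σ e * ρ e ^ p ≤ pEnergy σ p ρ :=
  single_le_sum (f := fun e => σ e * ρ e ^ p)
    (fun e _ => mul_nonneg (hσ e) (Real.rpow_nonneg (hρ e) p)) (mem_univ e)

theorem pEnergy_update [DecidableEq E] (σ : E → ℝ) (e : E) (x p : ℝ) (ρ : E → ℝ) :
    pEnergy (Function.update σ e x) p ρ = pEnergy σ p ρ + (x - σ e) * ρ e ^ p := by
  have hsplit : ∀ e', Function.update σ e x e' * ρ e' ^ p
      = σ e' * ρ e' ^ p + if e' = e then (x - σ e) * ρ e ^ p else 0 := by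
    intro e'
    rcases eq_or_ne e' e with rfl | h
    · simp only [Function.update_self, if_true]; ring
    · simp only [Function.update_of_ne h, h, if_false, add_zero]
  simp only [pEnergy, hsplit, sum_add_distrib, sum_ite_eq', mem_univ, if_true]

theorem pModulus_le_pEnergy (hσ : ∀ e, 0 ≤ σ e) (hρ : IsAdmissible N ρ) :
    pModulus N σ p ≤ pEnergy σ p ρ := by
  refine csInf_le ⟨0, ?_⟩ ⟨ρ, hρ, rfl⟩
  rintro _ ⟨ρ', hρ', rfl⟩
  exact sum_nonneg fun e _ => mul_nonneg (hσ e) (Real.rpow_nonneg (hρ'.1 e) p)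

theorem pEnergy_eq_pModulus_iff_isMinOn (hσ : ∀ e, 0 ≤ σ e) (hρ : IsAdmissible N ρ) :
    pEnergy σ p ρ = pModulus N σ p ↔ IsMinOn (pEnergy σ p) {ρ | IsAdmissible N ρ} ρ := by
  refine ⟨fun h => isMinOn_iff.2 fun ρ' hρ' => h ▸ pModulus_le_pEnergy hσ hρ', fun h => ?_⟩
  refine le_antisymm (le_csInf ⟨_, ρ, hρ, rfl⟩ ?_) (pModulus_le_pEnergy hσ hρ)
  rintro _ ⟨ρ', hρ', rfl⟩
  exact isMinOn_iff.1 h ρ' hρ'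

theorem pModulus_update_le [DecidableEq E] (hσ : ∀ e, 0 ≤ σ e) (hρ : IsAdmissible N ρ)
    (hopt : pEnergy σ p ρ = pModulus N σ p) {x : ℝ} (hx : 0 ≤ x) (e : E) :
    pModulus N (Function.update σ e x) p ≤ pModulus N σ p + (x - σ e) * ρ e ^ p := by
  have hσx : ∀ e', 0 ≤ Function.update σ e x e' :=
    (Function.forall_update_iff σ fun _ y => 0 ≤ y).2 ⟨hx, fun e' _ => hσ e'⟩
  calc pModulus N (Function.update σ e x) p ≤ pEnergy (Function.update σ e x) p ρ :=
        pModulus_le_pEnergy hσx hρ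
    _ = pModulus N σ p + (x - σ e) * ρ e ^ p := by rw [pEnergy_update, hopt]

variable (N) in
theorem isCompact_setOf_isAdmissible_pEnergy_le (hσ : ∀ e, 0 < σ e) (hp : 0 < p) (C : ℝ) :
    IsCompact {ρ | IsAdmissible N ρ ∧ pEnergy σ p ρ ≤ C} := by
  have hclosed : IsClosed {ρ | IsAdmissible N ρ ∧ pEnergy σ p ρ ≤ C} :=
    (isClosed_setOf_isAdmissible N).inter <| isClosed_le
      ((continuous_pEnergy hp.le).comp (continuous_const.prodMk continuous_id)) continuous_const
  refine (isCompact_Icc (a := 0) (b := fun e => (C / σ e) ^ p⁻¹)).of_isClosed_subset hclosed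
    fun ρ ⟨hρ, hC⟩ => ⟨hρ.1, fun e => ?_⟩
  have hρe : σ e * ρ e ^ p ≤ C := (mul_rpow_le_pEnergy (fun e => (hσ e).le) hρ.1 e).trans hC
  have hC0 : 0 ≤ C / σ e :=
    div_nonneg ((mul_nonneg (hσ e).le (Real.rpow_nonneg (hρ.1 e) p)).trans hρe) (hσ e).le
  rw [Real.le_rpow_inv_iff_of_pos (hρ.1 e) hC0 hp, le_div_iff₀' (hσ e)]
  exact hρe

theorem exists_isMinOn_pEnergy (hσ : ∀ e, 0 < σ e) (hp : 0 < p) (hρ : IsAdmissible N ρ) :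
    ∃ ρ', IsAdmissible N ρ' ∧ IsMinOn (pEnergy σ p) {ρ | IsAdmissible N ρ} ρ' := by
  obtain ⟨ρ', ⟨hρ', -⟩, hmin⟩ :=
    (isCompact_setOf_isAdmissible_pEnergy_le N hσ hp (pEnergy σ p ρ)).exists_isMinOn
      ⟨ρ, hρ, le_rfl⟩ ((continuous_pEnergy hp.le).comp (continuous_const.prodMk continuous_id)).continuousOn
  refine ⟨ρ', hρ', isMinOn_iff.2 fun ρ'' hρ'' => ?_⟩
  rcases le_total (pEnergy σ p ρ'') (pEnergy σ p ρ) with h | h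
  · exact isMinOn_iff.1 hmin ρ'' ⟨hρ'', h⟩
  · exact (isMinOn_iff.1 hmin ρ ⟨hρ, le_rfl⟩).trans h

theorem strictConvexOn_pEnergy (hσ : ∀ e, 0 < σ e) (hp : 1 < p) :
    StrictConvexOn ℝ (Set.Ici 0) (pEnergy σ p) := by
  refine ⟨convex_Ici 0, fun ρ₁ h₁ ρ₂ h₂ hne a b ha hb hab => ?_⟩
  obtain ⟨e, he⟩ := Function.ne_iff.mp hne
  have hconv := strictConvexOn_rpow hp
  simp only [pEnergy, smul_eq_mul, mul_sum, ← sum_add_distrib]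
  refine sum_lt_sum (fun e' _ => ?_) ⟨e, mem_univ e, ?_⟩
  · calc σ e' * (a • ρ₁ + b • ρ₂) e' ^ p
        ≤ σ e' * (a • ρ₁ e' ^ p + b • ρ₂ e' ^ p) :=
          mul_le_mul_of_nonneg_left (hconv.convexOn.2 (h₁ e') (h₂ e') ha.le hb.le hab) (hσ e').le
      _ = a * (σ e' * ρ₁ e' ^ p) + b * (σ e' * ρ₂ e' ^ p) := by simp only [smul_eq_mul]; ring
  · calc σ e * (a • ρ₁ + b • ρ₂) e ^ p
        < σ e * (a • ρ₁ e ^ p + b • ρ₂ e ^ p) :=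
          mul_lt_mul_of_pos_left (hconv.2 (h₁ e) (h₂ e) he ha hb hab) (hσ e)
      _ = a * (σ e * ρ₁ e ^ p) + b * (σ e * ρ₂ e ^ p) := by simp only [smul_eq_mul]; ring

theorem eq_of_isMinOn_pEnergy (hσ : ∀ e, 0 < σ e) (hp : 1 < p) {ρ' : E → ℝ}
    (hρ : IsAdmissible N ρ) (hρ' : IsAdmissible N ρ')
    (hmin : IsMinOn (pEnergy σ p) {ρ | IsAdmissible N ρ} ρ)
    (hmin' : IsMinOn (pEnergy σ p) {ρ | IsAdmissible N ρ} ρ') : ρ = ρ' :=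
  ((strictConvexOn_pEnergy hσ hp).subset (fun _ h => h.1) (convex_setOf_isAdmissible N)).eq_of_isMinOn
    hmin hmin' hρ hρ'

theorem tendsto_nhds_of_pEnergy_le {α : Type*} {l : Filter α} {σs ρs : α → E → ℝ}
    (hσ : ∀ e, 0 < σ e) (hp : 1 < p) (hσs : Tendsto σs l (𝓝 σ)) (hρ : IsAdmissible N ρ)
    (hmin : IsMinOn (pEnergy σ p) {ρ | IsAdmissible N ρ} ρ)
    (hρs : ∀ᶠ i in l, IsAdmissible N (ρs i) ∧ pEnergy (σs i) p (ρs i) ≤ pEnergy (σs i) p ρ) :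
    Tendsto ρs l (𝓝 ρ) := by
  have hp0 : 0 < p := by linarith
  have hEρ : Tendsto (fun i => pEnergy (σs i) p ρ) l (𝓝 (pEnergy σ p ρ)) :=
    ((continuous_pEnergy hp0.le).tendsto _).comp (hσs.prodMk_nhds tendsto_const_nhds)
  have hhalf : ∀ᶠ i in l, ∀ e, σ e / 2 ≤ σs i e := eventually_all.2 fun e =>
    (((continuous_apply e).tendsto σ).comp hσs).eventually
      (eventually_ge_nhds (half_lt_self (hσ e)))
  refine (isCompact_setOf_isAdmissible_pEnergy_le N (fun e => half_pos (hσ e)) hp0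
    (pEnergy σ p ρ + 1)).tendsto_nhds_of_unique_mapClusterPt ?_ ?_
  · filter_upwards [hρs, hhalf, hEρ.eventually (eventually_le_nhds (lt_add_one _))]
      with i ⟨hρi, hle⟩ hσi hEi
    exact ⟨hρi, (pEnergy_mono hσi hρi.1).trans (hle.trans hEi)⟩
  · rintro a ⟨ha, -⟩ hclus
    obtain ⟨U, hUl, hUa⟩ := mapClusterPt_iff_ultrafilter.1 hclus
    have hEa : pEnergy σ p a ≤ pEnergy σ p ρ :=
      le_of_tendsto_of_tendsto
        (((continuous_pEnergy hp0.le).tendsto _).comp ((hσs.mono_left hUl).prodMk_nhds hUa))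
        (hEρ.mono_left hUl) (hUl (hρs.mono fun _ h => h.2))
    exact eq_of_isMinOn_pEnergy hσ hp ha hρ
      (isMinOn_iff.2 fun ρ' hρ' => hEa.trans (isMinOn_iff.1 hmin ρ' hρ')) hmin

end

theorem hasDerivAt_of_sub_le_of_le_sub {f g : ℝ → ℝ} {x₀ c : ℝ}
    (hupper : ∀ᶠ x in 𝓝 x₀, f x - f x₀ ≤ (x - x₀) * c)
    (hlower : ∀ᶠ x in 𝓝 x₀, (x - x₀) * g x ≤ f x - f x₀)
    (hg : Tendsto g (𝓝 x₀) (𝓝 c)) : HasDerivAt f c x₀ := by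
  rw [hasDerivAt_iff_isLittleO]
  have hsmall : (fun x => (x - x₀) * (g x - c)) =o[𝓝 x₀] fun x => x - x₀ := by
    simpa using (Asymptotics.isBigO_refl (fun x => x - x₀) _).mul_isLittleO
      ((Asymptotics.isLittleO_one_iff ℝ).2 (tendsto_sub_nhds_zero_iff.2 hg))
  refine Asymptotics.IsBigO.trans_isLittleO (Asymptotics.IsBigO.of_bound 1 ?_) hsmall
  filter_upwards [hupper, hlower] with x hu hl
  rw [Real.norm_eq_abs, Real.norm_eq_abs, one_mul, smul_eq_mul, abs_le]
  constructor <;> nlinarith [abs_nonneg ((x - x₀) * (g x - c)), neg_abs_le ((x - x₀) * (g x - c))]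

theorem modulus_hasDerivAt_sigma_general
    {E Γ : Type*} [Fintype E] [DecidableEq E]
    (N : Γ → E → ℝ)
    (p : ℝ) (hp : 1 < p)
    (σ : E → ℝ) (hσ : ∀ e, 0 < σ e)
    (ρstar : E → ℝ) (hadm : IsAdmissible N ρstar)
    (hopt : pEnergy σ p ρstar = pModulus N σ p)
    (e : E) :
    HasDerivAt (fun x : ℝ => pModulus N (Function.update σ e x) p)
      (ρstar e ^ p) (σ e) := by
  have hp0 : 0 < p := by linarith
  have hσx : ∀ x, 0 < x → ∀ e', 0 < Function.update σ e x e' := fun x hx =>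
    (Function.forall_update_iff σ fun _ y => 0 < y).2 ⟨hx, fun e' _ => hσ e'⟩
  have hmin := (pEnergy_eq_pModulus_iff_isMinOn (fun e => (hσ e).le) hadm).1 hopt
  choose! ρ hρ hρmin using fun x (hx : 0 < x) => exists_isMinOn_pEnergy (hσx x hx) hp0 hadm
  have hpos : ∀ᶠ x in 𝓝 (σ e), 0 < x := eventually_gt_nhds (hσ e)
  refine hasDerivAt_of_sub_le_of_le_sub (g := fun x => ρ x e ^ p) ?_ ?_ ?_
  · filter_upwards [hpos] with x hx
    have := pModulus_update_le (fun e => (hσ e).le) hadm hopt hx.le e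
    simp only [Function.update_eq_self]
    linarith
  · filter_upwards [hpos] with x hx
    have := pModulus_update_le (fun e' => (hσx x hx e').le) (hρ x hx)
      ((pEnergy_eq_pModulus_iff_isMinOn (fun e' => (hσx x hx e').le) (hρ x hx)).2 (hρmin x hx))
      (hσ e).le e
    simp only [Function.update_idem, Function.update_eq_self, Function.update_self] at this ⊢
    linarith
  · have hσs : Tendsto (fun x => Function.update σ e x) (𝓝 (σ e)) (𝓝 σ) := by
      simpa using ((continuous_const (y := σ)).update e continuous_id).tendsto (σ e)
    refine (((continuous_apply e).tendsto ρstar).comp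
      (tendsto_nhds_of_pEnergy_le hσ hp hσs hadm hmin ?_)).rpow_const (Or.inr hp0.le)
    filter_upwards [hpos] with x hx
    exact ⟨hρ x hx, isMinOn_iff.1 (hρmin x hx) ρstar hadm⟩

/-- for fixed `p ∈ (1,∞)`, `F(σ) = Mod_{p,σ}(Γ)` is differentiable in each
weight, with `∂F/∂σ(e) = ρ*_σ(e)^p`. -/
theorem modulus_hasDerivAt_sigma
    {E Γ : Type*} [Fintype E] [Fintype Γ] [Nonempty E] [Nonempty Γ] [DecidableEq E]
    (N : Γ → E → ℝ) (hN : ∀ γ e, 0 ≤ N γ e) (hrow : ∀ γ, ∃ e, 0 < N γ e)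
    (p : ℝ) (hp : 1 < p)
    (σ : E → ℝ) (hσ : ∀ e, 0 < σ e)
    (ρstar : E → ℝ) (hadm : IsAdmissible N ρstar)
    (hopt : pEnergy σ p ρstar = pModulus N σ p)
    (e : E) :
    HasDerivAt (fun x : ℝ => pModulus N (Function.update σ e x) p)
      (ρstar e ^ p) (σ e) :=
  modulus_hasDerivAt_sigma_general N p hp σ hσ ρstar hadm hopt e
end
end
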